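/- Let n ≥ 1 and let W be a real matrix indexed by pairs (i,j) ∈ (Fin n × Fin n) that is symmetric (W_{(i,j),(k,l)} = W_{(k,l),(i,j)}) and entrywise nonnegative. Let X be an n×n real matrix with nonnegative entries such that f(X) > 0 and, for every (i,j) with X_{ij} > 0, the denominator f(X)·(r_i(X)+c_j(X)) is positive, and let Y be the matrix produced by one step of the SPM multiplicative update, Y_{ij} = X_{ij}·sqrt( M(X)_{ij} / ( f(X)·( r_i(X) + c_j(X) ) ) ). Then the Lagrangian with multiplier α = f(X) does not decrease: f(Y) − f(X)·g(Y) ≥ f(X) − f(X)·g(X). (Equivalently, L(Y) ≥ L(X) where L(Z) = f(Z) − α·(g(Z) − 1) with α = f(X).) -/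

import Mathlib

open BigOperators Matrix

/-- Quadratic matching objective f(X) = Σ_{(i,j),(k,l)} W_{(i,j),(k,l)} X_{ij} X_{kl}. -/
noncomputable def spmF (n : ℕ) (W : Matrix (Fin n × Fin n) (Fin n × Fin n) ℝ)
    (X : Matrix (Fin n) (Fin n) ℝ) : ℝ :=
  ∑ p : Fin n × Fin n, ∑ q : Fin n × Fin n, W p q * X p.1 p.2 * X q.1 q.2

/-- Gradient matrix M(X)_{ij} = Σ_{(k,l)} W_{(i,j),(k,l)} X_{kl}. -/
noncomputable def spmM (n : ℕ) (W : Matrix (Fin n × Fin n) (Fin n × Fin n) ℝ)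
    (X : Matrix (Fin n) (Fin n) ℝ) : Matrix (Fin n) (Fin n) ℝ :=
  fun i j => ∑ q : Fin n × Fin n, W (i, j) q * X q.1 q.2

/-- Row sums r_i(X) = Σ_j X_{ij}. -/
noncomputable def spmR (n : ℕ) (X : Matrix (Fin n) (Fin n) ℝ) (i : Fin n) : ℝ :=
  ∑ j, X i j

/-- Column sums c_j(X) = Σ_i X_{ij}. -/
noncomputable def spmC (n : ℕ) (X : Matrix (Fin n) (Fin n) ℝ) (j : Fin n) : ℝ :=
  ∑ i, X i j

/-- Constraint function g(X) = Σ_i r_i(X)² + Σ_j c_j(X)². -/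
noncomputable def spmG (n : ℕ) (X : Matrix (Fin n) (Fin n) ℝ) : ℝ :=
  ∑ i, (spmR n X i) ^ 2 + ∑ j, (spmC n X j) ^ 2

/-- One step of the SPM multiplicative update. -/
noncomputable def spmUpdate (n : ℕ) (W : Matrix (Fin n × Fin n) (Fin n × Fin n) ℝ)
    (X : Matrix (Fin n) (Fin n) ℝ) : Matrix (Fin n) (Fin n) ℝ :=
  fun i j => X i j *
    Real.sqrt (spmM n W X i j / (spmF n W X * (spmR n X i + spmC n X j)))

open Real Finset

/-
A majorize–minorize argument. Write `Y = X ∘ t` and `α = f(X)`. Since `a b ≥ 1 + log a + log b`,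
the quadratic form at `Y` is bounded below by `f(X) + 2 Σ X_{ij} M_{ij} log t_{ij}`, an expression
that separates over the entries; by Cauchy–Schwarz in each row and each column, `g(Y)` is bounded
above by `Σ X_{ij} (r_i + c_j) t_{ij}²`, which also separates and equals `g(X)` at `t = 1`. The
update chooses each `t_{ij}` to maximise the resulting separable minorant of the Lagrangian, and
comparing with `t = 1` entrywise is Gibbs' inequality `a - d ≤ a log (a / d)`.
-/

lemma one_add_log_add_log_le_mul {a b : ℝ} (ha : 0 < a) (hb : 0 < b) :
    1 + log a + log b ≤ a * b := by
  linarith [log_le_sub_one_of_pos (mul_pos ha hb), log_mul ha.ne' hb.ne']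

lemma sub_le_mul_log_div {a d : ℝ} (ha : 0 ≤ a) (hd : 0 < d) : a - d ≤ a * log (a / d) := by
  have h := mul_nonneg hd.le (InformationTheory.klFun_nonneg (div_nonneg ha hd.le))
  rw [InformationTheory.klFun, mul_sub, mul_add, ← mul_assoc, mul_div_cancel₀ _ hd.ne'] at h
  linarith

lemma mul_mul_sq_sqrt_div_sub_le {x a d : ℝ} (hx : 0 ≤ x) (ha : 0 ≤ a) (hd : 0 < x → 0 < d) :
    x * (d * √(a / d) ^ 2 - d) ≤ 2 * (x * a * log √(a / d)) := by
  rcases hx.eq_or_lt with hx0 | hxp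
  · simp [← hx0]
  have hd := hd hxp
  rw [sq_sqrt (div_nonneg ha hd.le), mul_div_cancel₀ _ hd.ne', log_sqrt (div_nonneg ha hd.le)]
  nlinarith [sub_le_mul_log_div ha hd]

section QuadraticForm

variable {ι : Type*} [Fintype ι] {W : Matrix ι ι ℝ}

lemma dotProduct_mulVec_eq_sum_sum (u v : ι → ℝ) :
    u ⬝ᵥ W *ᵥ v = ∑ p, ∑ q, W p q * u p * v q := by
  simp only [dotProduct, mulVec, mul_sum]
  exact sum_congr rfl fun p _ => sum_congr rfl fun q _ => by ring

lemma mulVec_pos_of_pos (hW : ∀ p q, 0 ≤ W p q) {x : ι → ℝ} (hx : ∀ q, 0 ≤ x q) {p q : ι}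
    (hWpq : 0 < W p q) (hxq : 0 < x q) : 0 < (W *ᵥ x) p :=
  (mul_pos hWpq hxq).trans_le <|
    single_le_sum (f := fun q => W p q * x q) (fun q _ => mul_nonneg (hW p q) (hx q)) (mem_univ q)

lemma dotProduct_mulVec_add_two_mul_sum_log_le (hWs : W.IsSymm) (hW : ∀ p q, 0 ≤ W p q)
    {x t : ι → ℝ} (hx : ∀ p, 0 ≤ x p) (ht : ∀ p, 0 < x p → 0 < (W *ᵥ x) p → 0 < t p) :
    x ⬝ᵥ W *ᵥ x + 2 * ∑ p, x p * (W *ᵥ x) p * log (t p) ≤ (x * t) ⬝ᵥ W *ᵥ (x * t) := by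
  have hterm : ∀ p q, W p q * x p * x q * (1 + log (t p) + log (t q))
      ≤ W p q * (x p * t p) * (x q * t q) := by
    intro p q
    rcases (hx p).eq_or_lt with hxp | hxp
    · simp [← hxp]
    rcases (hx q).eq_or_lt with hxq | hxq
    · simp [← hxq]
    rcases (hW p q).eq_or_lt with hWpq | hWpq
    · simp [← hWpq]
    have htp := ht p hxp (mulVec_pos_of_pos hW hx hWpq hxq)
    have htq := ht q hxq (mulVec_pos_of_pos hW hx (hWs.apply p q ▸ hWpq) hxp)
    calc W p q * x p * x q * (1 + log (t p) + log (t q))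
        ≤ W p q * x p * x q * (t p * t q) := by
          gcongr; exact one_add_log_add_log_le_mul htp htq
      _ = W p q * (x p * t p) * (x q * t q) := by ring
  have hcross : ∑ p, ∑ q, W p q * x p * x q * log (t q) = ∑ p, x p * (W *ᵥ x) p * log (t p) := by
    rw [sum_comm]
    refine sum_congr rfl fun q _ => ?_
    simp only [mulVec, dotProduct, sum_mul, mul_sum]
    exact sum_congr rfl fun p _ => by rw [← hWs.apply q p]; ring
  have hdiag : ∑ p, ∑ q, W p q * x p * x q * log (t p) = ∑ p, x p * (W *ᵥ x) p * log (t p) := by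
    refine sum_congr rfl fun p _ => ?_
    simp only [mulVec, dotProduct, sum_mul, mul_sum]
    exact sum_congr rfl fun q _ => by ring
  calc x ⬝ᵥ W *ᵥ x + 2 * ∑ p, x p * (W *ᵥ x) p * log (t p)
      = ∑ p, ∑ q, W p q * x p * x q * (1 + log (t p) + log (t q)) := by
        simp only [mul_add, mul_one, sum_add_distrib, hcross, hdiag, dotProduct_mulVec_eq_sum_sum]
        ring
    _ ≤ ∑ p, ∑ q, W p q * (x p * t p) * (x q * t q) :=
        sum_le_sum fun p _ => sum_le_sum fun q _ => hterm p q
    _ = (x * t) ⬝ᵥ W *ᵥ (x * t) := (dotProduct_mulVec_eq_sum_sum _ _).symm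

end QuadraticForm

section Spm

variable {n : ℕ} (X : Matrix (Fin n) (Fin n) ℝ)

lemma spmF_eq_dotProduct_mulVec (W : Matrix (Fin n × Fin n) (Fin n × Fin n) ℝ) :
    spmF n W X = (fun p => X p.1 p.2) ⬝ᵥ W *ᵥ fun p => X p.1 p.2 :=
  (dotProduct_mulVec_eq_sum_sum _ _).symm

lemma sum_sum_mul_spmR_add_spmC (s : Fin n → Fin n → ℝ) :
    ∑ i, ∑ j, X i j * (spmR n X i + spmC n X j) * s i j
      = ∑ i, spmR n X i * ∑ j, X i j * s i j + ∑ j, spmC n X j * ∑ i, X i j * s i j := by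
  simp only [mul_add, add_mul, sum_add_distrib, mul_sum]
  rw [sum_comm (f := fun i j => X i j * spmC n X j * s i j)]
  congr 1 <;> exact sum_congr rfl fun _ _ => sum_congr rfl fun _ _ => by ring

lemma spmG_eq_sum_sum : spmG n X = ∑ i, ∑ j, X i j * (spmR n X i + spmC n X j) := by
  have h := sum_sum_mul_spmR_add_spmC X fun _ _ => 1
  simp only [mul_one] at h
  rw [h, spmG]
  simp only [sq]
  rfl

lemma spmG_mul_le (hX : ∀ i j, 0 ≤ X i j) (t : Fin n → Fin n → ℝ) :
    spmG n (fun i j => X i j * t i j)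
      ≤ ∑ i, ∑ j, X i j * (spmR n X i + spmC n X j) * t i j ^ 2 := by
  refine le_of_le_of_eq ?_ (sum_sum_mul_spmR_add_spmC X fun i j => t i j ^ 2).symm
  refine add_le_add (sum_le_sum fun i _ => ?_) (sum_le_sum fun j _ => ?_) <;>
    refine sum_sq_le_sum_mul_sum_of_sq_le_mul _ (fun _ _ => hX _ _)
      (fun _ _ => mul_nonneg (hX _ _) (sq_nonneg _)) fun _ _ => le_of_eq (by ring)

end Spm

theorem spm_update_lagrangian_monotone_general (n : ℕ)
    (W : Matrix (Fin n × Fin n) (Fin n × Fin n) ℝ)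
    (hWsym : ∀ p q : Fin n × Fin n, W p q = W q p)
    (hWnn : ∀ p q : Fin n × Fin n, 0 ≤ W p q)
    (X : Matrix (Fin n) (Fin n) ℝ)
    (hXnn : ∀ i j, 0 ≤ X i j)
    (hf : 0 < spmF n W X)
    (hden : ∀ i j, 0 < X i j → 0 < spmF n W X * (spmR n X i + spmC n X j))
    (Y : Matrix (Fin n) (Fin n) ℝ)
    (hY : ∀ i j, Y i j = X i j *
      Real.sqrt (spmM n W X i j / (spmF n W X * (spmR n X i + spmC n X j)))) :
    spmF n W Y - spmF n W X * spmG n Y ≥ spmF n W X - spmF n W X * spmG n X := by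
  set α := spmF n W X
  set t : Fin n → Fin n → ℝ := fun i j => √(spmM n W X i j / (α * (spmR n X i + spmC n X j)))
  have hYt : Y = fun i j => X i j * t i j := funext₂ hY
  have hM : ∀ i j, 0 ≤ spmM n W X i j := fun i j =>
    sum_nonneg fun q _ => mul_nonneg (hWnn _ _) (hXnn _ _)
  have hfY : α + 2 * ∑ i, ∑ j, X i j * spmM n W X i j * log (t i j) ≤ spmF n W Y := by
    have := dotProduct_mulVec_add_two_mul_sum_log_le (W := W)
      (Matrix.IsSymm.ext fun p q => hWsym q p) hWnn (t := fun p => t p.1 p.2) (fun p => hXnn p.1 p.2)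
      fun p hXp hMp => sqrt_pos.2 (div_pos hMp (hden _ _ hXp))
    rw [← spmF_eq_dotProduct_mulVec, Fintype.sum_prod_type] at this
    rw [spmF_eq_dotProduct_mulVec Y, hYt]
    exact this
  have hsep : α * ∑ i, ∑ j, X i j * (spmR n X i + spmC n X j) * t i j ^ 2
      - α * ∑ i, ∑ j, X i j * (spmR n X i + spmC n X j)
      ≤ 2 * ∑ i, ∑ j, X i j * spmM n W X i j * log (t i j) := by
    simp only [mul_sum, ← sum_sub_distrib]
    gcongr with i _ j _
    exact le_of_eq_of_le (by ring) (mul_mul_sq_sqrt_div_sub_le (hXnn i j) (hM i j) (hden i j))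
  have hgY := mul_le_mul_of_nonneg_left (hYt ▸ spmG_mul_le X hXnn t) hf.le
  rw [spmG_eq_sum_sum X]
  linarith

/-- one step of the SPM multiplicative update does not decrease the
Lagrangian `L(Z) = f(Z) − α·(g(Z) − 1)` with multiplier `α = f(X)`. -/
theorem spm_update_lagrangian_monotone (n : ℕ) (hn : 1 ≤ n)
    (W : Matrix (Fin n × Fin n) (Fin n × Fin n) ℝ)
    (hWsym : ∀ p q : Fin n × Fin n, W p q = W q p)
    (hWnn : ∀ p q : Fin n × Fin n, 0 ≤ W p q)
    (X : Matrix (Fin n) (Fin n) ℝ)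
    (hXnn : ∀ i j, 0 ≤ X i j)
    (hf : 0 < spmF n W X)
    (hden : ∀ i j, 0 < X i j → 0 < spmF n W X * (spmR n X i + spmC n X j))
    (Y : Matrix (Fin n) (Fin n) ℝ)
    (hY : ∀ i j, Y i j = X i j *
      Real.sqrt (spmM n W X i j / (spmF n W X * (spmR n X i + spmC n X j)))) :
    spmF n W Y - spmF n W X * spmG n Y ≥ spmF n W X - spmF n W X * spmG n X :=
  spm_update_lagrangian_monotone_general n W hWsym hWnn X hXnn hf hden Y hY
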